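/- arXiv:1408.5527 — 3 statements merged into one kernel-verified Lean document; each statement's English description precedes it below -/
import Mathlib

section
/- Let p_n, p ∈ M_r be probability measures on ℤ^N with finite r-th moment. Then |p_n − p|_r → 0 if and only if for every f : ℤ^N → ℝ of polynomial growth of degree r (f ∈ C_r), Σ_x f(x) p_n(x) → Σ_x f(x) p(x). -/
/-!
With the weight `w x = |x|^r + 1`, the norm `|·|_r` is the `ℓ¹` norm of `w • (p - q)`, and `C_r` is
the set of functions `f` with `f / w` bounded. Norm convergence therefore gives convergence against
every `f ∈ C_r` by the estimate `|∑ f (pₙ - p)| ≤ c ∑ w |pₙ - p|`. Conversely, testing against `w`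
times an indicator and against `w` itself shows that `w pₙ → w p` pointwise and in total mass; for
nonnegative sequences this is Scheffé's lemma, which upgrades it to convergence in `ℓ¹`.
-/

/-- `nrm` is a norm on `ℝ^N`. -/
def IsNormOn (N : ℕ) (nrm : (Fin N → ℝ) → ℝ) : Prop :=
  (∀ v, 0 ≤ nrm v) ∧ (∀ v, nrm v = 0 ↔ v = 0) ∧
  (∀ (c : ℝ) (v), nrm (c • v) = |c| * nrm v) ∧
  (∀ v w, nrm (v + w) ≤ nrm v + nrm w)

/-- The norm restricted to lattice points `ℤ^N`. -/
noncomputable def latNorm {N : ℕ} (nrm : (Fin N → ℝ) → ℝ) (x : Fin N → ℤ) : ℝ :=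
  nrm (fun i => (x i : ℝ))

open Filter Topology

section WeightedSeries

variable {α ι : Type*} {l : Filter ι}

lemma summable_mul_of_abs_le_mul {w f u : α → ℝ} {c : ℝ} (hf : ∀ x, |f x| ≤ c * w x)
    (hu : Summable fun x => w x * |u x|) : Summable fun x => f x * u x :=
  Summable.of_norm_bounded (hu.mul_left c) fun x => by
    rw [norm_mul, Real.norm_eq_abs, Real.norm_eq_abs, ← mul_assoc]
    exact mul_le_mul_of_nonneg_right (hf x) (abs_nonneg _)

lemma abs_tsum_mul_sub_tsum_mul_le {w f u v : α → ℝ} {c : ℝ} (hw : ∀ x, 0 ≤ w x)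
    (hf : ∀ x, |f x| ≤ c * w x) (hu : Summable fun x => w x * |u x|)
    (hv : Summable fun x => w x * |v x|) :
    |∑' x, f x * u x - ∑' x, f x * v x| ≤ c * ∑' x, w x * |u x - v x| := by
  have huv : Summable fun x => w x * |u x - v x| :=
    (hu.add hv).of_nonneg_of_le (fun x => mul_nonneg (hw x) (abs_nonneg _)) fun x => by
      rw [← mul_add]; exact mul_le_mul_of_nonneg_left (abs_sub _ _) (hw x)
  have hfuv : Summable fun x => f x * (u x - v x) := summable_mul_of_abs_le_mul hf huv
  rw [← (summable_mul_of_abs_le_mul hf hu).tsum_sub (summable_mul_of_abs_le_mul hf hv),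
    ← tsum_mul_left]
  calc |∑' x, (f x * u x - f x * v x)| = |∑' x, f x * (u x - v x)| := by simp only [mul_sub]
    _ ≤ ∑' x, |f x * (u x - v x)| := by
      simpa only [Real.norm_eq_abs] using norm_tsum_le_tsum_norm hfuv.norm
    _ ≤ ∑' x, c * (w x * |u x - v x|) := by
      refine hfuv.abs.tsum_le_tsum (fun x => ?_) (huv.mul_left c)
      rw [abs_mul, ← mul_assoc]
      exact mul_le_mul_of_nonneg_right (hf x) (abs_nonneg _)

/-- Scheffé's lemma for series. -/
theorem tendsto_tsum_abs_sub_of_tendsto_tsum {a : ι → α → ℝ} {b : α → ℝ}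
    (ha : ∀ i x, 0 ≤ a i x) (hb : ∀ x, 0 ≤ b x) (ha_sum : ∀ i, Summable (a i))
    (hb_sum : Summable b) (hab : ∀ x, Tendsto (a · x) l (𝓝 (b x)))
    (hmass : Tendsto (fun i => ∑' x, a i x) l (𝓝 (∑' x, b x))) :
    Tendsto (fun i => ∑' x, |a i x - b x|) l (𝓝 0) := by
  have hmin_sum : ∀ i, Summable fun x => min (a i x) (b x) := fun i =>
    hb_sum.of_nonneg_of_le (fun x => le_min (ha i x) (hb x)) fun x => min_le_right _ _
  have hmin : Tendsto (fun i => ∑' x, min (a i x) (b x)) l (𝓝 (∑' x, b x)) :=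
    tendsto_tsum_of_dominated_convergence hb_sum
      (fun x => by simpa only [min_self] using (hab x).min (tendsto_const_nhds (x := b x)))
      (Eventually.of_forall fun i x => by
        rw [Real.norm_eq_abs, abs_of_nonneg (le_min (ha i x) (hb x))]
        exact min_le_right _ _)
  have hdecomp : ∀ i, ∑' x, |a i x - b x| =
      ∑' x, a i x + ∑' x, b x - 2 * ∑' x, min (a i x) (b x) := fun i => by
    rw [← (ha_sum i).tsum_add hb_sum, ← tsum_mul_left,
      ← ((ha_sum i).add hb_sum).tsum_sub ((hmin_sum i).mul_left 2)]
    refine tsum_congr fun x => ?_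
    rcases le_total (a i x) (b x) with h | h
    · rw [min_eq_left h, abs_of_nonpos (sub_nonpos.2 h)]; ring
    · rw [min_eq_right h, abs_of_nonneg (sub_nonneg.2 h)]; ring
  simp only [hdecomp]
  convert (hmass.add_const (∑' x, b x)).sub (hmin.const_mul 2) using 2
  ring

lemma tsum_indicator_singleton_mul (w g : α → ℝ) (x₀ : α) :
    ∑' x, ({x₀} : Set α).indicator w x * g x = w x₀ * g x₀ := by
  rw [tsum_eq_single x₀ fun x hx => by simp [hx]]
  simp

theorem tendsto_tsum_mul_abs_sub_iff {w : α → ℝ} {p : ι → α → ℝ} {q : α → ℝ}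
    (hw : ∀ x, 0 ≤ w x) (hp : ∀ i x, 0 ≤ p i x) (hq : ∀ x, 0 ≤ q x)
    (hpw : ∀ i, Summable fun x => w x * p i x) (hqw : Summable fun x => w x * q x) :
    Tendsto (fun i => ∑' x, w x * |p i x - q x|) l (𝓝 0) ↔
      ∀ f : α → ℝ, (∃ c > (0 : ℝ), ∀ x, |f x| ≤ c * w x) →
        Tendsto (fun i => ∑' x, f x * p i x) l (𝓝 (∑' x, f x * q x)) := by
  constructor
  · rintro hconv f ⟨c, -, hf⟩
    have hpw' : ∀ i, Summable fun x => w x * |p i x| := fun i =>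
      (hpw i).congr fun x => by rw [abs_of_nonneg (hp i x)]
    have hqw' : Summable fun x => w x * |q x| :=
      hqw.congr fun x => by rw [abs_of_nonneg (hq x)]
    refine tendsto_iff_norm_sub_tendsto_zero.2 <| squeeze_zero (fun _ => norm_nonneg _)
      (fun i => abs_tsum_mul_sub_tsum_mul_le hw hf (hpw' i) hqw') ?_
    simpa using hconv.const_mul c
  · intro htest
    have hpoint : ∀ x₀, Tendsto (fun i => w x₀ * p i x₀) l (𝓝 (w x₀ * q x₀)) := fun x₀ => by
      have hind : ∀ x, |({x₀} : Set α).indicator w x| ≤ 1 * w x := fun x => by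
        by_cases hx : x = x₀ <;> simp [hx, abs_of_nonneg, hw]
      simpa only [tsum_indicator_singleton_mul] using htest _ ⟨1, one_pos, hind⟩
    have hmass := htest w ⟨1, one_pos, fun x => by rw [one_mul, abs_of_nonneg (hw x)]⟩
    have hscheffe := tendsto_tsum_abs_sub_of_tendsto_tsum
      (fun i x => mul_nonneg (hw x) (hp i x)) (fun x => mul_nonneg (hw x) (hq x))
      hpw hqw hpoint hmass
    refine hscheffe.congr fun i => tsum_congr fun x => ?_
    rw [← mul_sub, abs_mul, abs_of_nonneg (hw x)]

end WeightedSeries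

theorem stmt7_general (N : ℕ) (nrm : (Fin N → ℝ) → ℝ) (hnrm : IsNormOn N nrm)
    (r : ℕ) (p : ℕ → (Fin N → ℤ) → ℝ) (q : (Fin N → ℤ) → ℝ)
    -- p_n, p are probability measures with finite r-th moment (members of M_r ∩ P)
    (hpn_nonneg : ∀ n x, 0 ≤ p n x) (hq_nonneg : ∀ x, 0 ≤ q x)
    (hpn_mom : ∀ n, Summable (fun x => (1 + latNorm nrm x ^ r) * p n x))
    (hq_mom : Summable (fun x => (1 + latNorm nrm x ^ r) * q x)) :
    Filter.Tendsto
        (fun n => ∑' x : Fin N → ℤ, (1/2) * (1 + latNorm nrm x ^ r) * |p n x - q x|)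
        Filter.atTop (nhds 0)
      ↔ ∀ f : (Fin N → ℤ) → ℝ,
          (∃ α > (0:ℝ), ∀ x, |f x| ≤ α * (latNorm nrm x ^ r + 1)) →
          Filter.Tendsto (fun n => ∑' x : Fin N → ℤ, f x * p n x) Filter.atTop
            (nhds (∑' x : Fin N → ℤ, f x * q x)) := by
  have hw : ∀ x, 0 ≤ latNorm nrm x ^ r + 1 := fun x => by
    have := pow_nonneg (hnrm.1 fun i => (x i : ℝ)) r
    unfold latNorm; linarith
  have hhalf : ∀ n, ∑' x, (1/2) * (1 + latNorm nrm x ^ r) * |p n x - q x| =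
      (1/2 : ℝ) • ∑' x, (latNorm nrm x ^ r + 1) * |p n x - q x| := fun n => by
    rw [smul_eq_mul, ← tsum_mul_left]
    exact tsum_congr fun x => by ring
  simp only [hhalf]
  refine Iff.trans ?_ (tendsto_tsum_mul_abs_sub_iff hw hpn_nonneg hq_nonneg
    (fun n => (hpn_mom n).congr fun x => by ring) (hq_mom.congr fun x => by ring))
  simpa only [smul_zero] using
    tendsto_const_smul_iff₀ (a := (0 : ℝ)) (l := atTop) (by norm_num : (1/2 : ℝ) ≠ 0)

theorem stmt7 (N : ℕ) (hN : 1 ≤ N) (nrm : (Fin N → ℝ) → ℝ) (hnrm : IsNormOn N nrm)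
    (r : ℕ) (p : ℕ → (Fin N → ℤ) → ℝ) (q : (Fin N → ℤ) → ℝ)
    -- p_n, p are probability measures with finite r-th moment (members of M_r ∩ P)
    (hpn_nonneg : ∀ n x, 0 ≤ p n x) (hq_nonneg : ∀ x, 0 ≤ q x)
    (hpn_mom : ∀ n, Summable (fun x => (1 + latNorm nrm x ^ r) * p n x))
    (hq_mom : Summable (fun x => (1 + latNorm nrm x ^ r) * q x))
    (hpn_prob : ∀ n, ∑' x : Fin N → ℤ, p n x = 1)
    (hq_prob : ∑' x : Fin N → ℤ, q x = 1) :
    Filter.Tendsto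
        (fun n => ∑' x : Fin N → ℤ, (1/2) * (1 + latNorm nrm x ^ r) * |p n x - q x|)
        Filter.atTop (nhds 0)
      ↔ ∀ f : (Fin N → ℤ) → ℝ,
          (∃ α > (0:ℝ), ∀ x, |f x| ≤ α * (latNorm nrm x ^ r + 1)) →
          Filter.Tendsto (fun n => ∑' x : Fin N → ℤ, f x * p n x) Filter.atTop
            (nhds (∑' x : Fin N → ℤ, f x * q x)) :=
  stmt7_general N nrm hnrm r p q hpn_nonneg hq_nonneg hpn_mom hq_mom
end

section
/- Suppose P(τ), φ(τ) are families of substochastic kernels on ℤ^N, (q+1)-times continuously differentiable in τ on [0, δ_r), agreeing with all derivatives up to order q at τ = 0, and satisfying the derivative bound Σ_{x'} (1+|x'|^r)|φ^{(q+1)}(τ,x,x')| ≤ H_r(|x|^{s_r}+1) e^{γ_r τ} and the same bound for P^{(q+1)}. Then there exists C_r > 0 such that for all τ ∈ [0, δ_r) and all g ∈ M, |(φ(τ) − P(τ)) g|_r ≤ C_r |g|_{s_r + r} τ^{q+1} e^{γ_r τ}. -/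
/-- A family `ψ 0` together with its derivative families `ψ i` (`i`-th τ-derivative of the
kernel), is a substochastic kernel family that is `q+1` times continuously differentiable
on `[0, δ)`. -/
def DerivFamily {N : ℕ} (q : ℕ) (δ : ℝ)
    (ψ : ℕ → ℝ → (Fin N → ℤ) → (Fin N → ℤ) → ℝ) : Prop :=
  -- substochastic kernel
  (∀ τ ∈ Set.Ico (0:ℝ) δ, ∀ x x', 0 ≤ ψ 0 τ x x') ∧
  (∀ τ ∈ Set.Ico (0:ℝ) δ, ∀ x,
      (∑' x' : Fin N → ℤ, ENNReal.ofReal (ψ 0 τ x x')) ≤ 1) ∧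
  -- ψ (i+1) is the derivative of ψ i on [0, δ), for i = 0, …, q
  (∀ i ≤ q, ∀ (x x' : Fin N → ℤ), ∀ τ ∈ Set.Ico (0:ℝ) δ,
      HasDerivAt (fun t => ψ i t x x') (ψ (i+1) τ x x') τ) ∧
  -- the (q+1)-st derivative is continuous on [0, δ)
  (∀ (x x' : Fin N → ℤ), ContinuousOn (fun t => ψ (q+1) t x x') (Set.Ico (0:ℝ) δ))

/-!
Write `D = φ - P`. Since `D` and its first `q` derivatives in `τ` vanish at `τ = 0`, Taylor's
formula gives `|D(τ, x, y)| ≤ τ ^ q ∫₀^τ |D^{(q+1)}(t, x, y)| dt`. Weighting by `1 + |y| ^ r`,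
summing over `y` and exchanging sum and integral (Tonelli), the assumed moment bounds on the
`(q+1)`-st derivatives give `Σ_y (1 + |y| ^ r) |D(τ, x, y)| ≲ H (|x| ^ s + 1) τ ^ (q+1) e^{γτ}`.
Finally `|D g|_r ≤ Σ_x |g x| Σ_y (1/2)(1 + |y| ^ r) |D(τ, x, y)|` and
`|x| ^ s + 1 ≤ 2 (1 + |x| ^ (s+r))`. All sums are taken in `ℝ≥0∞`, so no summability
conditions arise except for the final identification of `|g|_{s+r}`.
-/

open Set MeasureTheory

lemma Real.exp_mul_le_exp_abs_mul_mul_exp (γ : ℝ) {t τ δ : ℝ} (ht : 0 ≤ t) (htτ : t ≤ τ)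
    (hτδ : τ ≤ δ) : Real.exp (γ * t) ≤ Real.exp (|γ| * δ) * Real.exp (γ * τ) := by
  rw [← Real.exp_add, Real.exp_le_exp]
  nlinarith [abs_nonneg γ, neg_abs_le γ]

lemma pow_le_one_add_pow_add {a : ℝ} (ha : 0 ≤ a) (s r : ℕ) : a ^ s ≤ 1 + a ^ (s + r) := by
  rcases le_total a 1 with h | h
  · linarith [pow_le_one₀ ha h (n := s), pow_nonneg ha (s + r)]
  · linarith [pow_le_pow_right₀ h (Nat.le_add_right s r)]

/- Taylor's theorem with integral remainder, with the constant `1 / q!` replaced by `1`; by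
induction on `q` through the mean value theorem. -/
lemma abs_le_pow_mul_integral_abs_of_hasDerivAt {δ : ℝ} (q : ℕ) (f : ℕ → ℝ → ℝ)
    (hderiv : ∀ i ≤ q, ∀ t ∈ Ico 0 δ, HasDerivAt (f i) (f (i + 1) t) t)
    (hcont : ContinuousOn (f (q + 1)) (Ico 0 δ)) (h0 : ∀ i ≤ q, f i 0 = 0)
    {τ : ℝ} (hτ : τ ∈ Ico 0 δ) :
    |f 0 τ| ≤ τ ^ q * ∫ t in (0:ℝ)..τ, |f (q + 1) t| := by
  have hsub : Icc 0 τ ⊆ Ico 0 δ := Icc_subset_Ico_right hτ.2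
  induction q generalizing f τ with
  | zero =>
    have hftc : ∫ t in (0:ℝ)..τ, f 1 t = f 0 τ - f 0 0 :=
      intervalIntegral.integral_eq_sub_of_hasDerivAt
        (fun t ht => hderiv 0 le_rfl t (hsub (uIcc_of_le hτ.1 ▸ ht)))
        ((hcont.mono hsub).intervalIntegrable_of_Icc hτ.1)
    calc |f 0 τ| = |∫ t in (0:ℝ)..τ, f 1 t| := by rw [hftc, h0 0 le_rfl, sub_zero]
      _ ≤ _ := (intervalIntegral.abs_integral_le_integral_abs hτ.1).trans_eq (one_mul _).symm
  | succ q ih =>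
    set G : ℝ → ℝ := fun t => ∫ u in (0:ℝ)..t, |f (q + 2) u|
    have hG_mono : ∀ t ∈ Icc 0 τ, G t ≤ G τ := fun t ht =>
      intervalIntegral.integral_mono_interval le_rfl ht.1 ht.2
        (Filter.Eventually.of_forall fun _ => abs_nonneg _)
        ((hcont.mono hsub).abs.intervalIntegrable_of_Icc hτ.1)
    have hG_nonneg : ∀ t ∈ Icc 0 τ, 0 ≤ G t := fun t ht =>
      intervalIntegral.integral_nonneg ht.1 fun _ _ => abs_nonneg _
    have hf1 : ∀ t ∈ Icc 0 τ, |f 1 t| ≤ τ ^ q * G τ := fun t ht =>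
      calc |f 1 t| ≤ t ^ q * G t :=
            ih (fun i => f (i + 1)) (fun i hi => hderiv (i + 1) (by omega)) hcont
              (fun i hi => h0 (i + 1) (by omega)) (hsub ht)
              ((Icc_subset_Icc_right ht.2).trans hsub)
        _ ≤ τ ^ q * G τ := mul_le_mul (pow_le_pow_left₀ ht.1 ht.2 q) (hG_mono t ht)
            (hG_nonneg t ht) (pow_nonneg hτ.1 q)
    have hmvt := norm_image_sub_le_of_norm_deriv_le_segment'
      (fun t ht => (hderiv 0 (Nat.zero_le _) t (hsub ht)).hasDerivWithinAt)
      (fun t ht => hf1 t (Ico_subset_Icc_self ht)) τ (right_mem_Icc.2 hτ.1)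
    rw [h0 0 (Nat.zero_le _), sub_zero, sub_zero, Real.norm_eq_abs] at hmvt
    exact hmvt.trans_eq (by ring)

section WeightedSums

variable {ι : Type*} (w : ι → ℝ)

lemma tsum_ofReal_mul_integral_abs_le [Countable ι] (hw : ∀ i, 0 ≤ w i) (F : ℝ → ι → ℝ)
    {τ B : ℝ} (hτ : 0 ≤ τ) (hF : ∀ i, ContinuousOn (F · i) (Icc 0 τ))
    (hbound : ∀ t ∈ Ioc 0 τ, ∑' i, ENNReal.ofReal (w i * |F t i|) ≤ ENNReal.ofReal B) :
    ∑' i, ENNReal.ofReal (w i * ∫ t in (0:ℝ)..τ, |F t i|) ≤ ENNReal.ofReal (B * τ) := by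
  have hF' : ∀ i, ContinuousOn (fun t => w i * |F t i|) (Icc 0 τ) := fun i =>
    continuousOn_const.mul (hF i).abs
  have hlin : ∀ i, ENNReal.ofReal (w i * ∫ t in (0:ℝ)..τ, |F t i|)
      = ∫⁻ t in Ioc 0 τ, ENNReal.ofReal (w i * |F t i|) := fun i => by
    rw [← intervalIntegral.integral_const_mul, intervalIntegral.integral_of_le hτ]
    exact ofReal_integral_eq_lintegral_ofReal
      ((hF' i).integrableOn_Icc.mono_set Ioc_subset_Icc_self)
      (Filter.Eventually.of_forall fun t => mul_nonneg (hw i) (abs_nonneg _))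
  calc ∑' i, ENNReal.ofReal (w i * ∫ t in (0:ℝ)..τ, |F t i|)
      = ∫⁻ t in Ioc 0 τ, ∑' i, ENNReal.ofReal (w i * |F t i|) := by
        rw [lintegral_tsum fun i =>
          (((hF' i).mono Ioc_subset_Icc_self).aemeasurable measurableSet_Ioc).ennreal_ofReal]
        exact tsum_congr hlin
    _ ≤ ∫⁻ _ in Ioc 0 τ, ENNReal.ofReal B := setLIntegral_mono measurable_const hbound
    _ = ENNReal.ofReal (B * τ) := by
        rw [setLIntegral_const, Real.volume_Ioc, sub_zero, ENNReal.ofReal_mul' hτ]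

lemma tsum_ofReal_half_mul_abs_sub_le (hw : ∀ i, 0 ≤ w i) (a b : ι → ℝ) {M : ℝ}
    (ha : ∑' i, ENNReal.ofReal (w i * |a i|) ≤ ENNReal.ofReal M)
    (hb : ∑' i, ENNReal.ofReal (w i * |b i|) ≤ ENNReal.ofReal M) :
    ∑' i, ENNReal.ofReal (1 / 2 * w i * |a i - b i|) ≤ ENNReal.ofReal M := by
  calc ∑' i, ENNReal.ofReal (1 / 2 * w i * |a i - b i|)
      ≤ ∑' i, ENNReal.ofReal (1 / 2) *
          (ENNReal.ofReal (w i * |a i|) + ENNReal.ofReal (w i * |b i|)) := by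
        refine ENNReal.tsum_le_tsum fun i => ?_
        rw [← ENNReal.ofReal_add (mul_nonneg (hw i) (abs_nonneg _))
          (mul_nonneg (hw i) (abs_nonneg _)), ← ENNReal.ofReal_mul (by norm_num), mul_assoc,
          ← mul_add]
        gcongr ENNReal.ofReal (1 / 2 * ?_)
        exact mul_le_mul_of_nonneg_left (abs_sub _ _) (hw i)
    _ ≤ ENNReal.ofReal (1 / 2) * (ENNReal.ofReal M + ENNReal.ofReal M) := by
        rw [ENNReal.tsum_mul_left, ENNReal.tsum_add]
        gcongr
    _ = ENNReal.ofReal M := by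
        rw [← two_mul, ← mul_assoc, ← ENNReal.ofReal_ofNat 2, ← ENNReal.ofReal_mul (by norm_num)]
        norm_num

/- The factor `exp (|γ| * δ)` absorbs `exp (γ * t) ≤ exp (|γ| * δ) * exp (γ * τ)` for `t ≤ τ`. -/
lemma tsum_ofReal_mul_abs_le_of_hasDerivAt [Countable ι] (hw : ∀ i, 0 ≤ w i) (q : ℕ)
    {δ γ M : ℝ} (hM : 0 ≤ M) (D : ℕ → ℝ → ι → ℝ)
    (hderiv : ∀ i ≤ q, ∀ y, ∀ t ∈ Ico 0 δ, HasDerivAt (D i · y) (D (i + 1) t y) t)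
    (hcont : ∀ y, ContinuousOn (D (q + 1) · y) (Ico 0 δ)) (h0 : ∀ i ≤ q, ∀ y, D i 0 y = 0)
    (hbound : ∀ t ∈ Ico 0 δ,
      ∑' y, ENNReal.ofReal (w y * |D (q + 1) t y|) ≤ ENNReal.ofReal (M * Real.exp (γ * t)))
    {τ : ℝ} (hτ : τ ∈ Ico 0 δ) :
    ∑' y, ENNReal.ofReal (w y * |D 0 τ y|)
      ≤ ENNReal.ofReal (M * Real.exp (|γ| * δ) * τ ^ (q + 1) * Real.exp (γ * τ)) := by
  have hτq : 0 ≤ τ ^ q := pow_nonneg hτ.1 q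
  calc ∑' y, ENNReal.ofReal (w y * |D 0 τ y|)
      ≤ ∑' y, ENNReal.ofReal (τ ^ q) *
          ENNReal.ofReal (w y * ∫ t in (0:ℝ)..τ, |D (q + 1) t y|) := by
        refine ENNReal.tsum_le_tsum fun y => ?_
        rw [← ENNReal.ofReal_mul hτq, mul_left_comm]
        gcongr
        · exact hw y
        · exact abs_le_pow_mul_integral_abs_of_hasDerivAt q (fun i t => D i t y)
            (fun i hi => hderiv i hi y) (hcont y) (fun i hi => h0 i hi y) hτ
    _ ≤ ENNReal.ofReal (τ ^ q) *
          ENNReal.ofReal (M * Real.exp (|γ| * δ) * Real.exp (γ * τ) * τ) := by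
        rw [ENNReal.tsum_mul_left]
        gcongr
        refine tsum_ofReal_mul_integral_abs_le w hw (D (q + 1)) hτ.1
          (fun y => (hcont y).mono (Icc_subset_Ico_right hτ.2)) fun t ht => (hbound t ?_).trans ?_
        · exact ⟨ht.1.le, ht.2.trans_lt hτ.2⟩
        · rw [mul_assoc]
          gcongr
          exact Real.exp_mul_le_exp_abs_mul_mul_exp γ ht.1.le ht.2 hτ.2.le
    _ = _ := by
        rw [← ENNReal.ofReal_mul hτq]
        ring_nf

lemma tsum_ofReal_mul_abs_tsum_mul_le (hw : ∀ i, 0 ≤ w i) {X : Type*} (K : X → ι → ℝ)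
    (g : X → ℝ) :
    ∑' y, ENNReal.ofReal (w y * |∑' x, K x y * g x|)
      ≤ ∑' x, ENNReal.ofReal |g x| * ∑' y, ENNReal.ofReal (w y * |K x y|) := by
  calc ∑' y, ENNReal.ofReal (w y * |∑' x, K x y * g x|)
      ≤ ∑' y, ∑' x, ENNReal.ofReal (w y) * (ENNReal.ofReal |K x y| * ENNReal.ofReal |g x|) := by
        refine ENNReal.tsum_le_tsum fun y => ?_
        rw [ENNReal.ofReal_mul (hw y), ENNReal.tsum_mul_left, ← Real.enorm_eq_ofReal_abs]
        gcongr
        refine enorm_tsum_le_tsum_enorm.trans_eq (tsum_congr fun x => ?_)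
        rw [enorm_mul, Real.enorm_eq_ofReal_abs, Real.enorm_eq_ofReal_abs]
    _ = ∑' x, ENNReal.ofReal |g x| * ∑' y, ENNReal.ofReal (w y * |K x y|) := by
        rw [ENNReal.tsum_comm]
        refine tsum_congr fun x => ?_
        rw [← ENNReal.tsum_mul_left]
        refine tsum_congr fun y => ?_
        rw [ENNReal.ofReal_mul (hw y)]
        ring

end WeightedSums

lemma DerivFamily.tsum_ofReal_half_mul_abs_sub_le_mul_pow {N q : ℕ} {δ γ M : ℝ}
    {P φ : ℕ → ℝ → (Fin N → ℤ) → (Fin N → ℤ) → ℝ} (hP : DerivFamily q δ P) (hφ : DerivFamily q δ φ)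
    (hmatch : ∀ i ≤ q, ∀ x x', φ i 0 x x' = P i 0 x x') (w : (Fin N → ℤ) → ℝ)
    (hw : ∀ y, 0 ≤ w y) (hM : 0 ≤ M) (x : Fin N → ℤ)
    (hφbd : ∀ t ∈ Ico 0 δ,
      ∑' y, ENNReal.ofReal (w y * |φ (q + 1) t x y|) ≤ ENNReal.ofReal (M * Real.exp (γ * t)))
    (hPbd : ∀ t ∈ Ico 0 δ,
      ∑' y, ENNReal.ofReal (w y * |P (q + 1) t x y|) ≤ ENNReal.ofReal (M * Real.exp (γ * t)))
    {τ : ℝ} (hτ : τ ∈ Ico 0 δ) :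
    ∑' y, ENNReal.ofReal (1 / 2 * w y * |φ 0 τ x y - P 0 τ x y|)
      ≤ ENNReal.ofReal (M * Real.exp (|γ| * δ) * τ ^ (q + 1) * Real.exp (γ * τ)) :=
  tsum_ofReal_mul_abs_le_of_hasDerivAt (fun y => 1 / 2 * w y) (fun y => by linarith [hw y]) q hM
    (fun i t y => φ i t x y - P i t x y)
    (fun i hi y t ht => (hφ.2.2.1 i hi x y t ht).sub (hP.2.2.1 i hi x y t ht))
    (fun y => (hφ.2.2.2 x y).sub (hP.2.2.2 x y)) (fun i hi y => sub_eq_zero.2 (hmatch i hi x y))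
    (fun t ht => tsum_ofReal_half_mul_abs_sub_le w hw _ _ (hφbd t ht) (hPbd t ht)) hτ

lemma tsum_ofReal_abs_mul_pow_add_one_le {X : Type*} (a : X → ℝ) (ha : ∀ x, 0 ≤ a x) (s r : ℕ)
    (g : X → ℝ)
    (hg : Summable fun x => (1 + a x ^ (s + r)) * |g x|) {c : ℝ} (hc : 0 ≤ c) :
    ∑' x, ENNReal.ofReal |g x| * ENNReal.ofReal (c * (a x ^ s + 1))
      ≤ ENNReal.ofReal (4 * c * ∑' x, 1 / 2 * (1 + a x ^ (s + r)) * |g x|) := by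
  have hnonneg : ∀ x, 0 ≤ 2 * c * ((1 + a x ^ (s + r)) * |g x|) := fun x => by
    have := pow_nonneg (ha x) (s + r)
    positivity
  calc ∑' x, ENNReal.ofReal |g x| * ENNReal.ofReal (c * (a x ^ s + 1))
      ≤ ∑' x, ENNReal.ofReal (2 * c * ((1 + a x ^ (s + r)) * |g x|)) := by
        refine ENNReal.tsum_le_tsum fun x => ?_
        rw [← ENNReal.ofReal_mul (abs_nonneg _)]
        gcongr ENNReal.ofReal ?_
        have hpow : a x ^ s + 1 ≤ 2 * (1 + a x ^ (s + r)) := by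
          linarith [pow_le_one_add_pow_add (ha x) s r, pow_nonneg (ha x) (s + r)]
        linarith [mul_le_mul_of_nonneg_left hpow (mul_nonneg hc (abs_nonneg (g x)))]
    _ = ENNReal.ofReal (4 * c * ∑' x, 1 / 2 * (1 + a x ^ (s + r)) * |g x|) := by
        simp_rw [← ENNReal.ofReal_tsum_of_nonneg hnonneg (hg.mul_left _), mul_assoc (1 / 2 : ℝ),
          tsum_mul_left]
        ring_nf

theorem stmt8_general (N : ℕ) (nrm : (Fin N → ℝ) → ℝ) (hnrm : IsNormOn N nrm)
    (q r s : ℕ) (δ γ H : ℝ) (hH : 0 < H)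
    (P φ : ℕ → ℝ → (Fin N → ℤ) → (Fin N → ℤ) → ℝ)
    (hP : DerivFamily q δ P) (hφ : DerivFamily q δ φ)
    -- all derivatives up to order q agree at τ = 0
    (hmatch : ∀ i ≤ q, ∀ x x', φ i 0 x x' = P i 0 x x')
    -- derivative bound for φ^{(q+1)}
    (hφbd : ∀ τ ∈ Set.Ico (0:ℝ) δ, ∀ x,
        (∑' x' : Fin N → ℤ, ENNReal.ofReal ((1 + latNorm nrm x' ^ r) * |φ (q+1) τ x x'|))
          ≤ ENNReal.ofReal (H * (latNorm nrm x ^ s + 1) * Real.exp (γ * τ)))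
    -- the same bound for P^{(q+1)}
    (hPbd : ∀ τ ∈ Set.Ico (0:ℝ) δ, ∀ x,
        (∑' x' : Fin N → ℤ, ENNReal.ofReal ((1 + latNorm nrm x' ^ r) * |P (q+1) τ x x'|))
          ≤ ENNReal.ofReal (H * (latNorm nrm x ^ s + 1) * Real.exp (γ * τ))) :
    ∃ C > (0:ℝ), ∀ τ ∈ Set.Ico (0:ℝ) δ, ∀ g : (Fin N → ℤ) → ℝ,
      -- g ∈ M : all moment variations finite
      (∀ m : ℕ, Summable (fun x => (1 + latNorm nrm x ^ m) * |g x|)) →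
      (∑' y : Fin N → ℤ, ENNReal.ofReal
          ((1/2) * (1 + latNorm nrm y ^ r) *
            |∑' x : Fin N → ℤ, (φ 0 τ x y - P 0 τ x y) * g x|))
        ≤ ENNReal.ofReal
            (C * (∑' x : Fin N → ℤ, (1/2) * (1 + latNorm nrm x ^ (s + r)) * |g x|)
              * τ ^ (q+1) * Real.exp (γ * τ)) := by
  obtain ⟨hnrm_nonneg, -⟩ := hnrm
  have hlat : ∀ x, 0 ≤ latNorm nrm x := fun x => hnrm_nonneg _
  have hweight : ∀ y, 0 ≤ 1 + latNorm nrm y ^ r := fun y => by positivity [hlat y]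
  refine ⟨4 * H * Real.exp (|γ| * δ), by positivity, fun τ hτ g hg => ?_⟩
  set c : ℝ := H * Real.exp (|γ| * δ) * τ ^ (q + 1) * Real.exp (γ * τ) with hc
  have hc0 : 0 ≤ c := mul_nonneg (mul_nonneg (by positivity) (pow_nonneg hτ.1 _)) (by positivity)
  have hrow : ∀ x, ∑' y, ENNReal.ofReal
      (1 / 2 * (1 + latNorm nrm y ^ r) * |φ 0 τ x y - P 0 τ x y|)
        ≤ ENNReal.ofReal (c * (latNorm nrm x ^ s + 1)) := fun x => by
    refine (hP.tsum_ofReal_half_mul_abs_sub_le_mul_pow hφ hmatch _ hweight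
      (mul_nonneg hH.le (by positivity [hlat x])) x (hφbd · · x) (hPbd · · x) hτ).trans_eq ?_
    rw [hc]
    congr 1
    ring
  calc _ ≤ ∑' x, ENNReal.ofReal |g x| * ∑' y, ENNReal.ofReal
          (1 / 2 * (1 + latNorm nrm y ^ r) * |φ 0 τ x y - P 0 τ x y|) :=
        tsum_ofReal_mul_abs_tsum_mul_le _ (fun y => by positivity [hweight y])
          (fun x y => φ 0 τ x y - P 0 τ x y) g
    _ ≤ ∑' x, ENNReal.ofReal |g x| * ENNReal.ofReal (c * (latNorm nrm x ^ s + 1)) := by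
        gcongr with x
        exact hrow x
    _ ≤ ENNReal.ofReal (4 * c * ∑' x, 1 / 2 * (1 + latNorm nrm x ^ (s + r)) * |g x|) :=
        tsum_ofReal_abs_mul_pow_add_one_le _ hlat s r g (hg (s + r)) hc0
    _ = _ := by
        rw [hc]
        congr 1
        ring

theorem stmt8 (N : ℕ) (hN : 1 ≤ N) (nrm : (Fin N → ℝ) → ℝ) (hnrm : IsNormOn N nrm)
    (q r s : ℕ) (δ γ H : ℝ) (hδ : 0 < δ) (hH : 0 < H)
    (P φ : ℕ → ℝ → (Fin N → ℤ) → (Fin N → ℤ) → ℝ)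
    (hP : DerivFamily q δ P) (hφ : DerivFamily q δ φ)
    -- all derivatives up to order q agree at τ = 0
    (hmatch : ∀ i ≤ q, ∀ x x', φ i 0 x x' = P i 0 x x')
    -- derivative bound for φ^{(q+1)}
    (hφbd : ∀ τ ∈ Set.Ico (0:ℝ) δ, ∀ x,
        (∑' x' : Fin N → ℤ, ENNReal.ofReal ((1 + latNorm nrm x' ^ r) * |φ (q+1) τ x x'|))
          ≤ ENNReal.ofReal (H * (latNorm nrm x ^ s + 1) * Real.exp (γ * τ)))
    -- the same bound for P^{(q+1)}
    (hPbd : ∀ τ ∈ Set.Ico (0:ℝ) δ, ∀ x,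
        (∑' x' : Fin N → ℤ, ENNReal.ofReal ((1 + latNorm nrm x' ^ r) * |P (q+1) τ x x'|))
          ≤ ENNReal.ofReal (H * (latNorm nrm x ^ s + 1) * Real.exp (γ * τ))) :
    ∃ C > (0:ℝ), ∀ τ ∈ Set.Ico (0:ℝ) δ, ∀ g : (Fin N → ℤ) → ℝ,
      -- g ∈ M : all moment variations finite
      (∀ m : ℕ, Summable (fun x => (1 + latNorm nrm x ^ m) * |g x|)) →
      (∑' y : Fin N → ℤ, ENNReal.ofReal
          ((1/2) * (1 + latNorm nrm y ^ r) *
            |∑' x : Fin N → ℤ, (φ 0 τ x y - P 0 τ x y) * g x|))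
        ≤ ENNReal.ofReal
            (C * (∑' x : Fin N → ℤ, (1/2) * (1 + latNorm nrm x ^ (s + r)) * |g x|)
              * τ ^ (q+1) * Real.exp (γ * τ)) :=
  stmt8_general N nrm hnrm q r s δ γ H hH P φ hP hφ hmatch hφbd hPbd
end

section
/- Let K ~ Binomial(N_0(x), p(x,τ)) with p continuously differentiable in τ on [0,δ], |∂p/∂τ| bounded by a polynomial of degree s_1 in |x|, and N_0(x) bounded by a polynomial of degree s_2 in |x|. Then for each r ∈ ℕ, |d E(K^r)/dτ| = |N_0 p'(τ) E((K_{N_0−1}+1)^r − K_{N_0−1}^r)| is bounded over τ ∈ [0,δ] by a polynomial of degree s_1 + r·s_2 in |x|, where K_{N_0−1} ~ Binomial(N_0−1, p). -/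
/-- The norm restricted to nonnegative lattice points `ℤ_+^N`. -/
noncomputable def latNormP {N : ℕ} (nrm : (Fin N → ℝ) → ℝ) (x : Fin N → ℕ) : ℝ :=
  nrm (fun i => (x i : ℝ))

/-- The binomial probability mass function. -/
noncomputable def binPmf (n : ℕ) (p : ℝ) (k : ℕ) : ℝ :=
  (n.choose k : ℝ) * p ^ k * (1 - p) ^ (n - k)

lemma sum_binPmf (n : ℕ) (p : ℝ) : ∑ k ∈ Finset.range (n+1), binPmf n p k = 1 := by
  have h := add_pow p (1 - p) n
  have h2 : p + (1 - p) = 1 := by ring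
  rw [h2, one_pow] at h
  rw [h]
  exact Finset.sum_congr rfl fun k _ => by unfold binPmf; ring

lemma pow_diff_le (x : ℝ) (hx : 0 ≤ x) (r : ℕ) :
    (x+1)^r - x^r ≤ r * (x+1)^(r-1) := by
  have h := geom_sum₂_mul (x+1) x r
  have hsub : (x+1) - x = 1 := by ring
  rw [hsub, mul_one] at h
  rw [← h]
  calc ∑ i ∈ Finset.range r, (x+1)^i * x^(r-1-i)
      ≤ ∑ i ∈ Finset.range r, (x+1)^(r-1) := by
        apply Finset.sum_le_sum
        intro i hi
        have hi' : i ≤ r - 1 := by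
          have := Finset.mem_range.mp hi; omega
        calc (x+1)^i * x^(r-1-i) ≤ (x+1)^i * (x+1)^(r-1-i) := by
              apply mul_le_mul_of_nonneg_left
              · exact pow_le_pow_left₀ hx (by linarith) _
              · positivity
          _ = (x+1)^(r-1) := by rw [← pow_add]; congr 1; omega
    _ = r * (x+1)^(r-1) := by rw [Finset.sum_const, Finset.card_range, nsmul_eq_mul]

lemma poly_bd (t : ℝ) (ht : 0 ≤ t) (s1 s2 r : ℕ) :
    (t^s2+1)^r * (t^s1+1) ≤ 2^(r+1) * (t^(s1+r*s2)+1) := by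
  rcases le_total t 1 with h | h
  · have h1 : t^s2 ≤ 1 := pow_le_one₀ ht h
    have h2 : t^s1 ≤ 1 := pow_le_one₀ ht h
    have h3 : (t^s2+1)^r ≤ 2^r := by
      apply pow_le_pow_left₀ (by positivity) (by linarith)
    have h4 : (0:ℝ) ≤ t^(s1+r*s2) := by positivity
    calc (t^s2+1)^r * (t^s1+1) ≤ 2^r * 2 := by
          apply mul_le_mul h3 (by linarith) (by positivity) (by positivity)
      _ = 2^(r+1) * 1 := by ring
      _ ≤ 2^(r+1) * (t^(s1+r*s2)+1) := by
          apply mul_le_mul_of_nonneg_left (by linarith) (by positivity)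
  · have h1 : (1:ℝ) ≤ t^s2 := one_le_pow₀ h
    have h2 : (1:ℝ) ≤ t^s1 := one_le_pow₀ h
    calc (t^s2+1)^r * (t^s1+1) ≤ (2*t^s2)^r * (2*t^s1) := by
          apply mul_le_mul
          · apply pow_le_pow_left₀ (by positivity) (by linarith)
          · linarith
          · positivity
          · positivity
      _ = 2^(r+1) * t^(s2*r+s1) := by
          rw [mul_pow, ← pow_mul, pow_add, pow_succ]
          ring
      _ ≤ 2^(r+1) * (t^(s1+r*s2)+1) := by
          have heq : s2*r+s1 = s1+r*s2 := by ring
          rw [heq]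
          have : (0:ℝ) < 2^(r+1) := by positivity
          nlinarith [pow_nonneg ht (s1+r*s2)]

/-- For `K ~ Binomial(N₀(x), p(x,τ))` with `|∂p/∂τ|` bounded by a polynomial of degree
`s₁` in `|x|` and `N₀(x)` bounded by a polynomial of degree `s₂` in `|x|`, the derivative
`dE(K^r)/dτ = N₀ p'(τ) E((K_{N₀−1}+1)^r − K_{N₀−1}^r)` is bounded over `τ ∈ [0,δ]` by a
polynomial of degree `s₁ + r·s₂` in `|x|`. -/
theorem stmt18 (N : ℕ) (hN : 1 ≤ N) (nrm : (Fin N → ℝ) → ℝ) (hnrm : IsNormOn N nrm)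
    (δ : ℝ) (hδ : 0 < δ) (s1 s2 : ℕ)
    (N0 : (Fin N → ℕ) → ℕ) (p p' : (Fin N → ℕ) → ℝ → ℝ)
    (hderiv : ∀ x, ∀ τ ∈ Set.Icc (0:ℝ) δ, HasDerivAt (p x) (p' x τ) τ)
    (hcont : ∀ x, ContinuousOn (p' x) (Set.Icc (0:ℝ) δ))
    (hp01 : ∀ x, ∀ τ ∈ Set.Icc (0:ℝ) δ, 0 ≤ p x τ ∧ p x τ ≤ 1)
    (a : ℝ) (ha : 0 < a)
    (hp'bd : ∀ x, ∀ τ ∈ Set.Icc (0:ℝ) δ, |p' x τ| ≤ a * (latNormP nrm x ^ s1 + 1))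
    (hN0bd : ∀ x, (N0 x : ℝ) ≤ a * (latNormP nrm x ^ s2 + 1))
    (r : ℕ) (hr : 1 ≤ r) :
    ∃ b > (0:ℝ), ∀ x, ∀ τ ∈ Set.Icc (0:ℝ) δ,
      |(N0 x : ℝ) * p' x τ *
          ∑ k ∈ Finset.range (N0 x),
            (((k : ℝ) + 1) ^ r - (k : ℝ) ^ r) * binPmf (N0 x - 1) (p x τ) k|
        ≤ b * (latNormP nrm x ^ (s1 + r * s2) + 1) := by
  obtain ⟨hpos, -, -, -⟩ := hnrm
  have hr1 : (1:ℝ) ≤ (r:ℝ) := by exact_mod_cast hr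
  refine ⟨(r:ℝ) * a^(r+1) * 2^(r+1), by positivity, ?_⟩
  intro x τ hτ
  set t := latNormP nrm x with ht
  have ht0 : 0 ≤ t := hpos _
  have hRHS : 0 ≤ ((r:ℝ) * a^(r+1) * 2^(r+1)) * (t ^ (s1 + r * s2) + 1) := by positivity
  rcases Nat.eq_zero_or_pos (N0 x) with hN0 | hN0
  · simp only [hN0, Nat.cast_zero, zero_mul, Finset.range_zero, Finset.sum_empty, mul_zero,
      abs_zero]
    exact hRHS
  -- abbreviations
  set n := N0 x with hn
  obtain ⟨hp0, hp1⟩ := hp01 x τ hτ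
  have hpmf_nonneg : ∀ k, 0 ≤ binPmf (n-1) (p x τ) k := by
    intro k
    unfold binPmf
    have : 0 ≤ 1 - p x τ := by linarith
    positivity
  have hsum1 : ∑ k ∈ Finset.range n, binPmf (n-1) (p x τ) k = 1 := by
    have : n = (n-1) + 1 := by omega
    rw [this]
    exact sum_binPmf (n-1) (p x τ)
  -- bound on the sum
  set S := ∑ k ∈ Finset.range n, (((k : ℝ) + 1) ^ r - (k : ℝ) ^ r) * binPmf (n-1) (p x τ) k
    with hS
  have hS_nonneg : 0 ≤ S := by
    apply Finset.sum_nonneg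
    intro k _
    apply mul_nonneg _ (hpmf_nonneg k)
    have : (k:ℝ)^r ≤ ((k:ℝ)+1)^r := by
      apply pow_le_pow_left₀ (by positivity) (by linarith)
    linarith
  have hS_le : S ≤ (r:ℝ) * (n:ℝ)^(r-1) := by
    calc S ≤ ∑ k ∈ Finset.range n, ((r:ℝ) * (n:ℝ)^(r-1)) * binPmf (n-1) (p x τ) k := by
          apply Finset.sum_le_sum
          intro k hk
          apply mul_le_mul_of_nonneg_right _ (hpmf_nonneg k)
          have hk' : (k:ℝ) + 1 ≤ (n:ℝ) := by
            have := Finset.mem_range.mp hk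
            exact_mod_cast this
          calc ((k:ℝ)+1)^r - (k:ℝ)^r ≤ (r:ℝ) * ((k:ℝ)+1)^(r-1) :=
                pow_diff_le (k:ℝ) (by positivity) r
            _ ≤ (r:ℝ) * (n:ℝ)^(r-1) := by
                apply mul_le_mul_of_nonneg_left _ (by positivity)
                exact pow_le_pow_left₀ (by positivity) hk' _
      _ = ((r:ℝ) * (n:ℝ)^(r-1)) * ∑ k ∈ Finset.range n, binPmf (n-1) (p x τ) k := by
          rw [Finset.mul_sum]
      _ = (r:ℝ) * (n:ℝ)^(r-1) := by rw [hsum1, mul_one]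
  -- main estimate
  have habs : |(n : ℝ) * p' x τ * S| ≤ (n:ℝ) * |p' x τ| * S := by
    rw [abs_mul, abs_mul, abs_of_nonneg (show (0:ℝ) ≤ (n:ℝ) by positivity),
      abs_of_nonneg hS_nonneg]
  have hnr : (n:ℝ) * ((r:ℝ) * (n:ℝ)^(r-1)) = (r:ℝ) * (n:ℝ)^r := by
    have : (n:ℝ)^r = (n:ℝ) * (n:ℝ)^(r-1) := by
      rw [← pow_succ']
      congr 1
      omega
    rw [this]; ring
  have hstep : (n:ℝ) * |p' x τ| * S ≤ (r:ℝ) * (n:ℝ)^r * |p' x τ| := by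
    calc (n:ℝ) * |p' x τ| * S ≤ (n:ℝ) * |p' x τ| * ((r:ℝ) * (n:ℝ)^(r-1)) := by
          apply mul_le_mul_of_nonneg_left hS_le (by positivity)
      _ = (n:ℝ) * ((r:ℝ) * (n:ℝ)^(r-1)) * |p' x τ| := by ring
      _ = (r:ℝ) * (n:ℝ)^r * |p' x τ| := by rw [hnr]
  have hNbd : (n:ℝ)^r ≤ (a * (t^s2 + 1))^r :=
    pow_le_pow_left₀ (by positivity) (hN0bd x) r
  have hfinal : (r:ℝ) * (n:ℝ)^r * |p' x τ| ≤ (r:ℝ) * (a*(t^s2+1))^r * (a*(t^s1+1)) := by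
    apply mul_le_mul
    · apply mul_le_mul_of_nonneg_left hNbd (by positivity)
    · exact hp'bd x τ hτ
    · exact abs_nonneg _
    · positivity
  have hpoly : (r:ℝ) * (a*(t^s2+1))^r * (a*(t^s1+1))
      ≤ ((r:ℝ) * a^(r+1) * 2^(r+1)) * (t ^ (s1 + r * s2) + 1) := by
    have h1 : (a*(t^s2+1))^r * (a*(t^s1+1)) = a^(r+1) * ((t^s2+1)^r * (t^s1+1)) := by
      rw [mul_pow, pow_succ]; ring
    have h2 := poly_bd t ht0 s1 s2 r
    calc (r:ℝ) * (a*(t^s2+1))^r * (a*(t^s1+1))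
        = (r:ℝ) * a^(r+1) * ((t^s2+1)^r * (t^s1+1)) := by rw [mul_assoc, h1]; ring
      _ ≤ (r:ℝ) * a^(r+1) * (2^(r+1) * (t^(s1+r*s2)+1)) := by
          apply mul_le_mul_of_nonneg_left h2 (by positivity)
      _ = ((r:ℝ) * a^(r+1) * 2^(r+1)) * (t ^ (s1 + r * s2) + 1) := by ring
  linarith
end
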